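/- Let Φ_n(s) = 1 - (1 - 1/s)^n and, for X > 1, let Φ_{n,X}(s) = ∫_{-log X}^{∞} F_n(x) e^{(s-1/2)x} dx where F_n(x) = e^{x/2} ∑_{j=1}^{n} C(n,j) x^{j-1}/(j-1)! for x < 0 and 0 for x ≥ 0. Then for Re(s) > 0, Φ_n(s) - Φ_{n,X}(s) = X^{-s} ∑_{j=1}^{n} C(n,j) (-1)^{j-1} ∑_{m=0}^{j-1} (log X)^{j-m-1}/((j-m-1)!) · s^{-m-1}. -/

import Mathlib

/-!
The function `F_n` vanishes on `[0, ∞)`, and on `(-log X, 0)` the integrand is `e^{sx}` times a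
polynomial, so the integral is computed exactly from the primitive `e^{sz} P_k(z)` of
`z^k / k! · e^{sz}`. The value `P_k(0) = (-1)^k s^{-k-1}`, summed against `C(n, k+1)`, is the
binomial expansion of `1 - (1 - 1/s)^n`; what remains is the boundary term at `-log X`, where
`e^{-s log X} = X^{-s}`.
-/

open MeasureTheory

/-- The truncated test function of the proof of Theorem 2.1. -/
noncomputable def LiFtr (n : ℕ) (x : ℝ) : ℝ :=
  if x < 0 then
    Real.exp (x / 2) * ∑ j ∈ Finset.Icc 1 n, (n.choose j : ℝ) * x ^ (j - 1) / (Nat.factorial (j - 1) : ℝ)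
  else 0

open Finset Complex

theorem one_sub_one_sub_pow {R : Type*} [CommRing R] (t : R) (n : ℕ) :
    1 - (1 - t) ^ n = ∑ j ∈ Icc 1 n, (n.choose j : R) * (-1) ^ (j - 1) * t ^ j := by
  rw [sub_eq_neg_add (1 : R) t, add_pow, Nat.range_succ_eq_Icc_zero,
    ← add_sum_Ioc_eq_sum_Icc n.zero_le, ← Icc_add_one_left_eq_Ioc, zero_add, ← sub_sub,
    pow_zero, one_pow, Nat.choose_zero_right, Nat.cast_one, mul_one, mul_one, sub_self, zero_sub,
    ← sum_neg_distrib]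
  refine sum_congr rfl fun j hj ↦ ?_
  obtain ⟨k, rfl⟩ : ∃ k, j = k + 1 := ⟨j - 1, by grind⟩
  rw [one_pow, neg_pow, Nat.add_sub_cancel, pow_succ]
  ring

noncomputable def antiderivPoly (s : ℂ) (k : ℕ) (z : ℂ) : ℂ :=
  ∑ m ∈ range (k + 1), (-1) ^ m * (z ^ (k - m) / (k - m).factorial) * (s ^ (m + 1))⁻¹

theorem antiderivPoly_apply_zero (s : ℂ) (k : ℕ) :
    antiderivPoly s k 0 = (-1) ^ k * (s ^ (k + 1))⁻¹ := by
  rw [antiderivPoly, sum_eq_single_of_mem k (self_mem_range_succ k)]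
  · simp
  · intro m hm hmk
    simp [show k - m ≠ 0 by grind]

theorem antiderivPoly_succ (s : ℂ) (k : ℕ) (z : ℂ) :
    antiderivPoly s (k + 1) z = (z ^ (k + 1) / (k + 1).factorial - antiderivPoly s k z) / s := by
  rw [antiderivPoly, sum_range_succ', antiderivPoly, sub_div, sum_div, sub_eq_neg_add,
    ← sum_neg_distrib]
  congr 1
  · refine sum_congr rfl fun m _ ↦ ?_
    rw [Nat.add_sub_add_right, pow_succ, pow_succ _ (m + 1)]
    ring
  · simp [div_eq_mul_inv]

theorem hasDerivAt_exp_mul_antiderivPoly {s : ℂ} (hs : s ≠ 0) (k : ℕ) (z : ℂ) :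
    HasDerivAt (fun w ↦ exp (s * w) * antiderivPoly s k w)
      (z ^ k / k.factorial * exp (s * z)) z := by
  have hexp : HasDerivAt (fun w ↦ exp (s * w)) (exp (s * z) * s) z := by
    simpa using ((hasDerivAt_id z).const_mul s).cexp
  induction k with
  | zero =>
    have hP : (fun w ↦ exp (s * w) * antiderivPoly s 0 w) = fun w ↦ exp (s * w) * s⁻¹ := by
      ext w; simp [antiderivPoly]
    rw [hP]
    exact (hexp.mul_const s⁻¹).congr_deriv (by simp [hs])
  | succ k ih =>
    simp_rw [antiderivPoly_succ, mul_div_assoc', mul_sub]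
    refine (((hexp.mul ((hasDerivAt_pow (k + 1) z).div_const _)).sub ih).div_const s).congr_deriv ?_
    rw [Nat.factorial_succ]
    push_cast
    field_simp
    ring

theorem integral_pow_div_factorial_mul_exp {s : ℂ} (hs : s ≠ 0) (k : ℕ) (a b : ℝ) :
    ∫ x in a..b, (x : ℂ) ^ k / k.factorial * exp (s * x) =
      exp (s * b) * antiderivPoly s k b - exp (s * a) * antiderivPoly s k a :=
  intervalIntegral.integral_eq_sub_of_hasDerivAt
    (fun x _ ↦ (hasDerivAt_exp_mul_antiderivPoly hs k x).comp_ofReal)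
    ((by fun_prop : Continuous _).intervalIntegrable _ _)

theorem antiderivPoly_neg (s : ℂ) (k : ℕ) (L : ℂ) :
    antiderivPoly s k (-L) =
      (-1) ^ k * ∑ m ∈ range (k + 1), L ^ (k - m) / (k - m).factorial * (s ^ (m + 1))⁻¹ := by
  rw [antiderivPoly, mul_sum]
  refine sum_congr rfl fun m hm ↦ ?_
  rw [neg_pow, show k = m + (k - m) by grind, pow_add, Nat.add_sub_cancel_left]
  ring

theorem liFtr_mul_exp {x : ℝ} (hx : x < 0) (n : ℕ) (s : ℂ) :
    (LiFtr n x : ℂ) * exp ((s - 1 / 2) * x) =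
      ∑ j ∈ Icc 1 n,
        (n.choose j : ℂ) * ((x : ℂ) ^ (j - 1) / (j - 1).factorial * exp (s * x)) := by
  have hexp : exp ((x : ℂ) / 2) * exp ((s - 1 / 2) * x) = exp (s * x) := by
    rw [← exp_add]; ring_nf
  rw [LiFtr, if_pos hx]
  push_cast
  rw [mul_right_comm, hexp, mul_sum]
  exact sum_congr rfl fun j _ ↦ by ring

theorem integral_Ioi_liFtr_mul_exp {s : ℂ} (hs : s ≠ 0) (n : ℕ) {a : ℝ} (ha : a ≤ 0) :
    ∫ x in Set.Ioi a, (LiFtr n x : ℂ) * exp ((s - 1 / 2) * x) =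
      ∑ j ∈ Icc 1 n, (n.choose j : ℂ) *
        (antiderivPoly s (j - 1) 0 - exp (s * a) * antiderivPoly s (j - 1) a) := by
  have hvanish : ∀ x ∈ Set.Ioi a \ Set.Ioo a 0, (LiFtr n x : ℂ) * exp ((s - 1 / 2) * x) = 0 :=
    fun x hx ↦ by simp [LiFtr, not_lt.1 fun h ↦ hx.2 ⟨hx.1, h⟩]
  rw [setIntegral_eq_of_subset_of_forall_sdiff_eq_zero measurableSet_Ioi Set.Ioo_subset_Ioi_self
      hvanish, setIntegral_congr_fun measurableSet_Ioo fun x hx ↦ liFtr_mul_exp hx.2 n s,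
    ← integral_Ioc_eq_integral_Ioo, ← intervalIntegral.integral_of_le ha,
    intervalIntegral.integral_finsetSum fun j _ ↦
      (by fun_prop : Continuous _).intervalIntegrable _ _]
  refine sum_congr rfl fun j _ ↦ ?_
  rw [intervalIntegral.integral_const_mul, integral_pow_div_factorial_mul_exp hs]
  simp

theorem stmt12_general (n : ℕ) (X : ℝ) (hX : 1 < X) (s : ℂ) (hs : 0 < s.re) :
    (1 - (1 - 1 / s) ^ n) -
        ∫ x in Set.Ioi (-Real.log X), (LiFtr n x : ℂ) * Complex.exp ((s - 1 / 2) * x) =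
      (X : ℂ) ^ (-s) * ∑ j ∈ Finset.Icc 1 n, (n.choose j : ℂ) * (-1) ^ (j - 1) *
        ∑ m ∈ Finset.range j,
          ((Real.log X : ℂ) ^ (j - m - 1) / (Nat.factorial (j - m - 1) : ℂ)) *
            (s ^ (m + 1))⁻¹ := by
  have hs0 : s ≠ 0 := fun h ↦ by simp [h] at hs
  have hX0 : 0 < X := zero_lt_one.trans hX
  have hcpow : (X : ℂ) ^ (-s) = exp (s * (-Real.log X : ℝ)) := by
    rw [cpow_def_of_ne_zero (mod_cast hX0.ne'), ← ofReal_log hX0.le]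
    push_cast
    ring_nf
  rw [integral_Ioi_liFtr_mul_exp hs0 n (neg_nonpos.2 (Real.log_pos hX).le), one_sub_one_sub_pow,
    hcpow, ← sum_sub_distrib, mul_sum]
  refine sum_congr rfl fun j hj ↦ ?_
  obtain ⟨k, rfl⟩ : ∃ k, j = k + 1 := ⟨j - 1, by grind⟩
  simp only [Nat.add_sub_cancel, Nat.sub_sub, Nat.add_sub_add_right, antiderivPoly_apply_zero]
  push_cast
  rw [antiderivPoly_neg]
  ring

/-- (2.4): for `Re s > 0` and `X > 1`,
`Φ_n(s) - Φ_{n,X}(s) = X^{-s} ∑_{j=1}^n C(n,j)(-1)^{j-1} ∑_{m=0}^{j-1} (log X)^{j-m-1}/(j-m-1)! · s^{-m-1}`,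
where `Φ_n(s) = 1 - (1 - 1/s)^n` and `Φ_{n,X}(s) = ∫_{-log X}^∞ F_n(x) e^{(s-1/2)x} dx`. -/
theorem stmt12 (n : ℕ) (hn : 1 ≤ n) (X : ℝ) (hX : 1 < X) (s : ℂ) (hs : 0 < s.re) :
    (1 - (1 - 1 / s) ^ n) -
        ∫ x in Set.Ioi (-Real.log X), (LiFtr n x : ℂ) * Complex.exp ((s - 1 / 2) * x) =
      (X : ℂ) ^ (-s) * ∑ j ∈ Finset.Icc 1 n, (n.choose j : ℂ) * (-1) ^ (j - 1) *
        ∑ m ∈ Finset.range j,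
          ((Real.log X : ℂ) ^ (j - m - 1) / (Nat.factorial (j - m - 1) : ℂ)) *
            (s ^ (m + 1))⁻¹ :=
  stmt12_general n X hX s hs
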